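/- arXiv:1712.01773 — 9 statements merged into one kernel-verified Lean document; each statement's English description precedes it below -/
import Mathlib

section
/- Let S be a left Ore set in a domain R and let (s, r) ∈ S × R. Then the left fraction s⁻¹r is a unit in the Ore localization S⁻¹R if and only if r ∈ LSat(S). In particular, the image ρ(r) = 1⁻¹r of r under the structural embedding ρ : R → S⁻¹R is a unit if and only if r ∈ LSat(S). -/
/-- A subset `S` of a ring is multiplicatively closed: `1 ∈ S`, `0 ∉ S`,
and `S` is closed under multiplication. -/
def IsMultClosedSet {R : Type*} [Ring R] (S : Set R) : Prop :=
  (1 : R) ∈ S ∧ (0 : R) ∉ S ∧ ∀ s ∈ S, ∀ t ∈ S, s * t ∈ S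

/-- A subset `T` with `0 ∉ T` is left saturated if `a * b ∈ T` implies `b ∈ T`. -/
def LeftSaturatedSet {R : Type*} [Ring R] (T : Set R) : Prop :=
  (0 : R) ∉ T ∧ ∀ a b : R, a * b ∈ T → b ∈ T

/-- The left saturation closure `LSat(S) = {r | ∃ w, w * r ∈ S}`. -/
def LSat {R : Type*} [Ring R] (S : Set R) : Set R :=
  {r : R | ∃ w : R, w * r ∈ S}

/-- `S` satisfies the left Ore condition in `R`: for all `s ∈ S`, `r ∈ R`
there are `s' ∈ S`, `r' ∈ R` with `s' * r = r' * s`. -/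
def LeftOreCond {R : Type*} [Ring R] (S : Set R) : Prop :=
  ∀ s ∈ S, ∀ r : R, ∃ s' ∈ S, ∃ r' : R, s' * r = r' * s

/-- A left Ore set: multiplicatively closed and satisfying the left Ore condition. -/
def IsLeftOreSet {R : Type*} [Ring R] (S : Set R) : Prop :=
  IsMultClosedSet S ∧ LeftOreCond S

/-- `(A, φ)` is a left Ore localization of `R` at `S`: `φ` is injective, every
element of `S` becomes a unit, and every element of `A` is a left fraction
`φ(s)⁻¹ * φ(r)`, i.e. `φ s * x = φ r` for some `s ∈ S`, `r ∈ R`. -/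
structure IsLeftOreLocalization {R A : Type*} [Ring R] [Ring A]
    (S : Set R) (φ : R →+* A) : Prop where
  injective : Function.Injective φ
  isUnit : ∀ s ∈ S, IsUnit (φ s)
  surj : ∀ x : A, ∃ s ∈ S, ∃ r : R, φ s * x = φ r

/-- in a left Ore localization `S⁻¹R`, a left fraction `s⁻¹r`
(i.e. `x` with `φ s * x = φ r`) is a unit iff `r ∈ LSat S`; in particular
`ρ(r) = φ r` is a unit iff `r ∈ LSat S`. -/
theorem stmt_3 {R A : Type*} [Ring R] [IsDomain R] [Ring A] (S : Set R)
    (hS : IsLeftOreSet S) (φ : R →+* A) (hφ : IsLeftOreLocalization S φ)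
    (s : R) (hs : s ∈ S) (r : R) (x : A) (hx : φ s * x = φ r) :
    (IsUnit x ↔ r ∈ LSat S) ∧ (IsUnit (φ r) ↔ r ∈ LSat S) := by
  obtain ⟨⟨hone, hzero, hmul⟩, hore⟩ := hS
  obtain ⟨hinj, hunit, hsurj⟩ := hφ
  have hnt : (1 : A) ≠ 0 := by
    intro h
    have h1 : φ (1 : R) = φ 0 := by simp [h]
    exact one_ne_zero (hinj h1)
  -- A has no zero divisors
  have hnzd : ∀ x y : A, x * y = 0 → x = 0 ∨ y = 0 := by
    intro x y hxy
    obtain ⟨s1, hs1, r1, h1⟩ := hsurj x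
    obtain ⟨t, ht, q, h2⟩ := hsurj y
    obtain ⟨t', ht', r', h3⟩ := hore t ht r1
    have key : φ (r' * q) = 0 := by
      calc φ (r' * q) = φ r' * (φ t * y) := by rw [map_mul, h2]
        _ = φ (r' * t) * y := by rw [map_mul, mul_assoc]
        _ = φ t' * φ r1 * y := by rw [← h3, map_mul]
        _ = φ t' * (φ s1 * x) * y := by rw [h1]
        _ = φ t' * φ s1 * (x * y) := by rw [mul_assoc, mul_assoc, mul_assoc]
        _ = 0 := by rw [hxy, mul_zero]
    have hrq : r' * q = 0 := hinj (by simpa using key)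
    rcases mul_eq_zero.mp hrq with hr' | hq
    · left
      have ht'0 : t' ≠ 0 := fun h => hzero (h ▸ ht')
      have hr1 : r1 = 0 := by
        have : t' * r1 = 0 := by rw [h3, hr', zero_mul]
        rcases mul_eq_zero.mp this with h | h
        · exact absurd h ht'0
        · exact h
      have hx0 : φ s1 * x = 0 := by rw [h1, hr1, map_zero]
      exact ((hunit s1 hs1).mul_right_eq_zero).mp hx0
    · right
      have hy0 : φ t * y = 0 := by rw [h2, hq, map_zero]
      exact ((hunit t ht).mul_right_eq_zero).mp hy0
  -- left inverse implies unit in A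
  have hleftinv : ∀ b y : A, y * b = 1 → IsUnit b := by
    intro b y hyb
    have hb : b ≠ 0 := by
      intro h
      rw [h, mul_zero] at hyb
      exact hnt hyb.symm
    have h0 : (b * y - 1) * b = 0 := by
      rw [sub_mul, one_mul, mul_assoc, hyb, mul_one, sub_self]
    rcases hnzd _ _ h0 with h | h
    · exact ⟨⟨b, y, sub_eq_zero.mp h, hyb⟩, rfl⟩
    · exact absurd h hb
  -- φ r unit ↔ r ∈ LSat S
  have hmain : IsUnit (φ r) ↔ r ∈ LSat S := by
    constructor
    · rintro ⟨u, hu⟩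
      obtain ⟨t, ht, q, h2⟩ := hsurj (↑u⁻¹ : A)
      have hyr : (↑u⁻¹ : A) * φ r = 1 := by rw [← hu]; exact u.inv_mul
      have : φ (q * r) = φ t := by
        rw [map_mul, ← h2, mul_assoc, hyr, mul_one]
      exact ⟨q, (hinj this) ▸ ht⟩
    · rintro ⟨w, hw⟩
      obtain ⟨u, hu⟩ := hunit _ hw
      have : ((↑u⁻¹ : A) * φ w) * φ r = 1 := by
        rw [mul_assoc, ← map_mul, ← hu]; exact u.inv_mul
      exact hleftinv _ _ this
  have hxr : IsUnit x ↔ IsUnit (φ r) := by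
    obtain ⟨u, hu⟩ := hunit s hs
    rw [← hx, ← hu, Units.isUnit_units_mul]
  exact ⟨hxr.trans hmain, hmain⟩
end

section
/- Let S be a left Ore set in a domain R. Then LSat(S) is saturated: for all a, b ∈ R, if a·b ∈ LSat(S) then both a ∈ LSat(S) and b ∈ LSat(S). -/
/-- for a left Ore set `S` in a domain, `LSat S` is saturated
(on both sides). -/
theorem stmt_4 {R : Type*} [Ring R] [IsDomain R] (S : Set R)
    (hS : IsLeftOreSet S) (a b : R) (hab : a * b ∈ LSat S) :
    a ∈ LSat S ∧ b ∈ LSat S := by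
  obtain ⟨w, hw⟩ := hab
  obtain ⟨⟨h1, h0, hmul⟩, hore⟩ := hS
  have hb : b ∈ LSat S := ⟨w * a, by rwa [← mul_assoc] at hw⟩
  refine ⟨?_, hb⟩
  have hbne : b ≠ 0 := by
    rintro rfl
    exact h0 (by simpa using hw)
  obtain ⟨s', hs', r', hsr⟩ := hore _ hw b
  have : (s' - r' * (w * a)) * b = 0 := by
    rw [sub_mul, hsr]
    rw [mul_assoc, mul_assoc, sub_self]
  rcases mul_eq_zero.mp this with h | h
  · refine ⟨r' * w, ?_⟩
    have : s' = r' * (w * a) := sub_eq_zero.mp h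
    rw [mul_assoc]
    rwa [← this]
  · exact absurd h hbne
end

section
/- Let S be a multiplicatively closed subset of a domain R. Then S satisfies the left Ore condition in R if and only if LSat(S) satisfies the left Ore condition in R. -/
/-- `S` satisfies the left Ore condition iff `LSat S` does. -/
theorem stmt_5 {R : Type*} [Ring R] [IsDomain R] (S : Set R)
    (hS : IsMultClosedSet S) :
    LeftOreCond S ↔ LeftOreCond (LSat S) := by
  constructor
  · intro h t ht r
    obtain ⟨w, hwt⟩ := ht
    obtain ⟨s', hs', r', hr'⟩ := h (w * t) hwt r
    exact ⟨s', ⟨1, by simpa using hs'⟩, r' * w, by rw [hr', mul_assoc]⟩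
  · intro h s hs r
    obtain ⟨t, ⟨w, hwt⟩, r', hr'⟩ := h s ⟨1, by simpa using hs⟩ r
    exact ⟨w * t, hwt, w * r', by rw [mul_assoc, hr', mul_assoc]⟩
end

section
/- Let S be a left Ore set in a domain R. Then LSat(S) is again a left Ore set in R; in particular, LSat(S) is multiplicatively closed (for x, y ∈ LSat(S) one has x·y ∈ LSat(S)). -/
/-- for a left Ore set `S` in a domain, `LSat S` is again a left
Ore set; in particular it is multiplicatively closed. -/
theorem stmt_6 {R : Type*} [Ring R] [IsDomain R] (S : Set R)
    (hS : IsLeftOreSet S) :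
    IsLeftOreSet (LSat S) ∧ ∀ x ∈ LSat S, ∀ y ∈ LSat S, x * y ∈ LSat S := by
  obtain ⟨⟨h1, h0, hmul⟩, hore⟩ := hS
  have hclosed : ∀ x ∈ LSat S, ∀ y ∈ LSat S, x * y ∈ LSat S := by
    rintro x ⟨w, hw⟩ y ⟨v, hv⟩
    obtain ⟨s', hs', r', hrel⟩ := hore (w * x) hw v
    refine ⟨r' * w, ?_⟩
    have : r' * w * (x * y) = s' * (v * y) := by
      rw [← mul_assoc s' v y, hrel]; noncomm_ring
    rw [this]
    exact hmul _ hs' _ hv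
  refine ⟨⟨⟨⟨1, by simpa using h1⟩, ?_, hclosed⟩, ?_⟩, hclosed⟩
  · rintro ⟨w, hw⟩
    exact h0 (by simpa using hw)
  · rintro s ⟨w, hw⟩ r
    obtain ⟨s', hs', r', hrel⟩ := hore (w * s) hw r
    exact ⟨s', ⟨1, by simpa using hs'⟩, r' * w, by rw [hrel, mul_assoc]⟩
end

section
/- Let S and T be left Ore sets in a domain R. If LSat(S) = LSat(T), then the Ore localizations S⁻¹R and T⁻¹R are isomorphic as rings. -/
section Aux
variable {R : Type*} [Ring R]

/-- The submonoid with carrier `S`. -/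
def oreSubmonoid (S : Set R) (hS : IsLeftOreSet S) : Submonoid R where
  carrier := S
  one_mem' := hS.1.1
  mul_mem' := fun ha hb => hS.1.2.2 _ ha _ hb

/-- Any abstract left Ore localization is isomorphic to the Mathlib `OreLocalization`. -/
lemma loc_equiv {C : Type*} [Ring C] (S' : Submonoid R) [OreLocalization.OreSet S']
    (ψ : R →+* C) (hinj : Function.Injective ψ)
    (hunit : ∀ s : S', IsUnit (ψ s))
    (hsurj : ∀ x : C, ∃ s : S', ∃ r : R, ψ s * x = ψ r) :
    Nonempty (OreLocalization S' R ≃+* C) := by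
  classical
  let fS : S' →* Units C :=
    { toFun := fun s => (hunit s).unit
      map_one' := by ext; simp
      map_mul' := by intro a b; ext; simp }
  have hf : ∀ s : S', ψ s = fS s := fun s => ((hunit s).unit_spec).symm
  let F := OreLocalization.universalHom ψ fS hf
  have hFinj : Function.Injective F := by
    rw [injective_iff_map_eq_zero]
    intro a ha
    induction a using OreLocalization.ind with
    | _ r s =>
      rw [OreLocalization.universalHom_apply] at ha
      have hr : ψ r = 0 := by
        have := congrArg (fun z => ((fS s : Units C) : C) * z) ha
        simpa [← mul_assoc] using this
      have : r = 0 := hinj (by simpa using hr)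
      rw [this, OreLocalization.zero_oreDiv']
  have hFsurj : Function.Surjective F := by
    intro x
    obtain ⟨s, r, hx⟩ := hsurj x
    refine ⟨r /ₒ s, ?_⟩
    rw [OreLocalization.universalHom_apply]
    symm
    rw [Units.eq_inv_mul_iff_mul_eq]
    simpa [← hf s] using hx
  exact ⟨RingEquiv.ofBijective F ⟨hFinj, hFsurj⟩⟩

variable [IsDomain R] {B : Type*} [Ring B]

/-- The localization of a domain has no zero divisors. -/
lemma loc_domain (T : Set R) (hT : IsLeftOreSet T) (φ' : R →+* B)
    (hφ' : IsLeftOreLocalization T φ') :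
    ∀ x y : B, x * y = 0 → x = 0 ∨ y = 0 := by
  intro x y hxy
  obtain ⟨s, hs, r, hsx⟩ := hφ'.surj x
  obtain ⟨s', hs', r', hs'y⟩ := hφ'.surj y
  obtain ⟨t, ht, r₂, htr⟩ := hT.2 s' hs' r
  have key : φ' (r₂ * r') = φ' 0 := by
    have h1 : φ' r * y = 0 := by
      rw [← hsx, mul_assoc, hxy, mul_zero]
    calc φ' (r₂ * r') = φ' r₂ * (φ' s' * y) := by rw [hs'y, map_mul]
      _ = φ' (r₂ * s') * y := by rw [map_mul, mul_assoc]
      _ = φ' t * (φ' r * y) := by rw [← htr, map_mul, mul_assoc]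
      _ = φ' 0 := by rw [h1, mul_zero, map_zero]
  have hrr : r₂ * r' = 0 := hφ'.injective key
  rcases mul_eq_zero.mp hrr with h0 | h0
  · left
    have htr0 : t * r = 0 := by rw [htr, h0, zero_mul]
    have hr0 : r = 0 := by
      rcases mul_eq_zero.mp htr0 with h | h
      · exact absurd (h ▸ ht) hT.1.2.1
      · exact h
    have h2 : φ' s * x = φ' s * 0 := by rw [hsx, hr0, map_zero, mul_zero]
    exact (hφ'.isUnit s hs).mul_left_cancel h2
  · right
    have h2 : φ' s' * y = φ' s' * 0 := by rw [hs'y, h0, map_zero, mul_zero]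
    exact (hφ'.isUnit s' hs').mul_left_cancel h2

end Aux

section Aux2
variable {R : Type*} [Ring R] [IsDomain R] {B : Type*} [Ring B]

/-- Every element of the left saturation becomes a unit in the localization. -/
lemma loc_unit_LSat (T : Set R) (hT : IsLeftOreSet T) (φ' : R →+* B)
    (hφ' : IsLeftOreLocalization T φ') :
    ∀ r ∈ LSat T, IsUnit (φ' r) := by
  intro r ⟨w, hwr⟩
  have hu := hφ'.isUnit _ hwr
  set x : B := ((hu.unit⁻¹ : Units B) : B) * φ' w with hx
  have hleft : x * φ' r = 1 := by
    rw [hx, mul_assoc, ← map_mul]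
    have h1 := hu.unit.inv_mul
    rwa [hu.unit_spec] at h1
  have hr0 : (φ' r : B) ≠ 0 := by
    intro h0
    have : r = 0 := hφ'.injective (by simpa using h0)
    rw [this, mul_zero] at hwr
    exact hT.1.2.1 hwr
  have hright : φ' r * x = 1 := by
    have h1 : (φ' r * x - 1) * φ' r = 0 := by
      rw [sub_mul, one_mul, mul_assoc, hleft, mul_one, sub_self]
    rcases loc_domain T hT φ' hφ' _ _ h1 with h | h
    · rwa [sub_eq_zero] at h
    · exact absurd h hr0
  exact ⟨⟨φ' r, x, hright, hleft⟩, rfl⟩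

/-- If `LSat S = LSat T` then `B = T⁻¹R` is also a localization of `R` at `S`. -/
lemma loc_at_S (S T : Set R) (hS : IsLeftOreSet S) (hT : IsLeftOreSet T)
    (φ' : R →+* B) (hφ' : IsLeftOreLocalization T φ') (h : LSat S = LSat T) :
    IsLeftOreLocalization S φ' := by
  refine ⟨hφ'.injective, ?_, ?_⟩
  · intro s hs
    exact loc_unit_LSat T hT φ' hφ' s (h ▸ ⟨1, by rwa [one_mul]⟩)
  · intro x
    obtain ⟨t, ht, r, htx⟩ := hφ'.surj x
    have : t ∈ LSat S := h.symm ▸ ⟨1, by rwa [one_mul]⟩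
    obtain ⟨w, hwt⟩ := this
    exact ⟨w * t, hwt, w * r, by rw [map_mul, mul_assoc, htx, ← map_mul]⟩

end Aux2


/-- if `LSat S = LSat T` for left Ore sets `S`, `T`, then the
localizations `S⁻¹R` and `T⁻¹R` are isomorphic as rings. -/
theorem stmt_8 {R A B : Type*} [Ring R] [IsDomain R] [Ring A] [Ring B]
    (S T : Set R) (hS : IsLeftOreSet S) (hT : IsLeftOreSet T)
    (φ : R →+* A) (hφ : IsLeftOreLocalization S φ)
    (φ' : R →+* B) (hφ' : IsLeftOreLocalization T φ')
    (h : LSat S = LSat T) :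
    Nonempty (A ≃+* B) := by
  have hφ'S : IsLeftOreLocalization S φ' := loc_at_S S T hS hT φ' hφ' h
  set S' : Submonoid R := oreSubmonoid S hS with hS'
  have hOre : Nonempty (OreLocalization.OreSet S') := by
    rw [OreLocalization.nonempty_oreSet_iff_of_noZeroDivisors]
    intro r s
    obtain ⟨s2, hs2, r2, h2⟩ := hS.2 s s.2 r
    exact ⟨r2, ⟨s2, hs2⟩, h2⟩
  obtain ⟨inst⟩ := hOre
  letI := inst
  have e1 := loc_equiv S' φ hφ.injective (fun s => hφ.isUnit s s.2)
    (fun x => by obtain ⟨s, hs, r, hr⟩ := hφ.surj x; exact ⟨⟨s, hs⟩, r, hr⟩)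
  have e2 := loc_equiv S' φ' hφ'S.injective (fun s => hφ'S.isUnit s s.2)
    (fun x => by obtain ⟨s, hs, r, hr⟩ := hφ'S.surj x; exact ⟨⟨s, hs⟩, r, hr⟩)
  obtain ⟨f1⟩ := e1
  obtain ⟨f2⟩ := e2
  exact ⟨f1.symm.trans f2⟩
end

section
/- Let R be a domain and g₁, …, g_k ∈ R \ {0} pairwise commuting elements (gᵢ·gⱼ = gⱼ·gᵢ for all i, j). Let S = [g₁, …, g_k] be the multiplicative monoid generated by g₁, …, g_k and T = [g] the multiplicative monoid generated by the product g := g₁·…·g_k. Then S satisfies the left Ore condition in R if and only if T satisfies the left Ore condition in R. -/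
/-- for pairwise commuting nonzero `g₁, …, g_k` in a domain `R`,
the monoid `S = [g₁, …, g_k]` satisfies the left Ore condition iff the monoid
`T = [g₁⋯g_k]` does. -/
theorem stmt_13 {R : Type*} [Ring R] [IsDomain R] {k : ℕ} (g : Fin k → R)
    (hg : ∀ i, g i ≠ 0) (hcomm : ∀ i j, g i * g j = g j * g i) :
    LeftOreCond ((Submonoid.closure (Set.range g) : Submonoid R) : Set R) ↔
      LeftOreCond ((Submonoid.closure {(List.ofFn g).prod} : Submonoid R) : Set R) := by
  set P : R := (List.ofFn g).prod with hP
  -- P commutes with each g j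
  have hcP : ∀ j, Commute (g j) P := by
    intro j
    apply Commute.list_prod_right
    intro x hx
    rw [List.mem_ofFn] at hx
    obtain ⟨i, rfl⟩ := hx
    exact (hcomm j i)
  -- P is in S
  have hPS : P ∈ Submonoid.closure (Set.range g) := by
    apply Submonoid.list_prod_mem
    intro x hx
    rw [List.mem_ofFn] at hx
    obtain ⟨i, rfl⟩ := hx
    exact Submonoid.subset_closure ⟨i, rfl⟩
  -- every element of S left-divides a power of P, and commutes with P
  have key : ∀ s ∈ Submonoid.closure (Set.range g),
      Commute s P ∧ ∃ w : R, ∃ n : ℕ, w * s = P ^ n := by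
    intro s hs
    induction hs using Submonoid.closure_induction with
    | mem x hx =>
      obtain ⟨i, rfl⟩ := hx
      refine ⟨hcP i, ?_⟩
      -- g i divides P : P = l₁.prod * g i * l₂.prod with everything commuting
      have : ∃ l₁ l₂ : List R, List.ofFn g = l₁ ++ g i :: l₂ := by
        apply List.append_of_mem
        rw [List.mem_ofFn]
        exact ⟨i, rfl⟩
      obtain ⟨l₁, l₂, hl⟩ := this
      have hcomm2 : Commute (g i) l₂.prod := by
        apply Commute.list_prod_right
        intro x hx
        have hx' : x ∈ List.ofFn g := by rw [hl]; simp [hx]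
        rw [List.mem_ofFn] at hx'
        obtain ⟨j, rfl⟩ := hx'
        exact hcomm i j
      refine ⟨l₁.prod * l₂.prod, 1, ?_⟩
      rw [pow_one, hP, hl, List.prod_append, List.prod_cons]
      rw [mul_assoc, ← hcomm2.eq, ← mul_assoc]
    | one => exact ⟨Commute.one_left P, 1, 0, by simp⟩
    | mul x y hx hy ihx ihy =>
      obtain ⟨hcx, w₁, n₁, h₁⟩ := ihx
      obtain ⟨hcy, w₂, n₂, h₂⟩ := ihy
      refine ⟨hcx.mul_left hcy, w₂ * w₁, n₂ + n₁, ?_⟩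
      calc w₂ * w₁ * (x * y) = w₂ * (w₁ * x * y) := by rw [mul_assoc, mul_assoc]
        _ = w₂ * (P ^ n₁ * y) := by rw [h₁]
        _ = w₂ * (y * P ^ n₁) := by rw [(hcy.pow_right n₁).eq]
        _ = w₂ * y * P ^ n₁ := by rw [mul_assoc]
        _ = P ^ (n₂ + n₁) := by rw [h₂, ← pow_add]
  -- T ⊆ S
  have hTS : (Submonoid.closure {P} : Submonoid R) ≤ Submonoid.closure (Set.range g) := by
    rw [Submonoid.closure_le]
    intro x hx
    rw [Set.mem_singleton_iff] at hx
    subst hx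
    exact hPS
  constructor
  · intro hS t ht r
    obtain ⟨s', hs', r', h⟩ := hS t (hTS ht) r
    obtain ⟨-, w, n, hw⟩ := key s' hs'
    refine ⟨P ^ n, ?_, w * r', ?_⟩
    · exact Submonoid.pow_mem (Submonoid.closure {P}) (Submonoid.subset_closure (Set.mem_singleton P)) n
    · rw [← hw, mul_assoc, h, ← mul_assoc]
  · intro hT s hs r
    obtain ⟨-, w, n, hw⟩ := key s hs
    obtain ⟨t', ht', r', h⟩ := hT (P ^ n) (Submonoid.pow_mem (Submonoid.closure {P}) (Submonoid.subset_closure (Set.mem_singleton P)) n) r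
    refine ⟨t', hTS ht', r' * w, ?_⟩
    rw [h, ← hw, mul_assoc]
end

section
/- Let R be a domain and g₁, …, g_k ∈ R \ {0} pairwise commuting elements. Let S = [g₁, …, g_k] and T = [g₁·…·g_k]. If S and T are left Ore sets in R, then the Ore localizations S⁻¹R and T⁻¹R are isomorphic as rings. -/
/-!
Every `gᵢ` divides `g₁⋯g_k` on both sides by a cofactor commuting with it, so a map inverting
`g₁⋯g_k` inverts every `gᵢ`, hence all of `S = [g₁, …, g_k]`. Since `T ⊆ S`, the localization
`T⁻¹R` is then also a left Ore localization at `S`, and left Ore localizations at the same set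
are unique up to isomorphism: `φ(s)⁻¹φ(r) ↦ ψ(s)⁻¹ψ(r)` is well defined and additive and
multiplicative by the usual common-denominator arguments.
-/

theorem List.isUnit_of_mem_of_isUnit_prod {M : Type*} [Monoid M] {l : List M} {a : M}
    (ha : a ∈ l) (hcomm : ∀ x ∈ l, ∀ y ∈ l, x * y = y * x) (hl : IsUnit l.prod) :
    IsUnit a := by
  classical
  have ha_comm : Commute a (l.erase a).prod :=
    Commute.list_prod_right _ _ fun x hx => hcomm a ha x (List.mem_of_mem_erase hx)
  rw [← List.prod_erase_of_comm ha hcomm] at hl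
  exact (ha_comm.isUnit_mul_iff.mp hl).1

theorem isUnit_of_mem_closure_of_isUnit_prod {M N : Type*} [Monoid M] [Monoid N]
    {k : ℕ} (g : Fin k → M) (hcomm : ∀ i j, g i * g j = g j * g i) (f : M →* N)
    (hprod : IsUnit (f (List.ofFn g).prod)) {s : M} (hs : s ∈ Submonoid.closure (Set.range g)) :
    IsUnit (f s) := by
  have hgen : ∀ i, IsUnit (f (g i)) := by
    intro i
    rw [map_list_prod, List.map_ofFn] at hprod
    refine List.isUnit_of_mem_of_isUnit_prod (List.mem_ofFn.mpr ⟨i, rfl⟩) ?_ hprod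
    simp only [List.mem_ofFn, Function.comp_apply]
    rintro _ ⟨j, rfl⟩ _ ⟨j', rfl⟩
    rw [← map_mul, ← map_mul, hcomm]
  have hle : Submonoid.closure (Set.range g) ≤ (IsUnit.submonoid N).comap f :=
    Submonoid.closure_le.mpr (Set.range_subset_iff.mpr hgen)
  exact hle hs

section FractionArithmetic

variable {R C : Type*} [Ring R] [Ring C] (χ : R →+* C) {s s' r r' u v : R} {x x' : C}

theorem RingHom.fraction_add (hx : χ s * x = χ r) (hx' : χ s' * x' = χ r')
    (hore : u * s = v * s') : χ (u * s) * (x + x') = χ (u * r + v * r') := by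
  have hx'_num : χ (u * s) * x' = χ (v * r') := by rw [hore, map_mul, mul_assoc, hx', map_mul]
  rw [mul_add, hx'_num, map_mul, mul_assoc, hx, ← map_mul, map_add]

theorem RingHom.fraction_mul (hx : χ s * x = χ r) (hx' : χ s' * x' = χ r')
    (hore : u * r = v * s') : χ (u * s) * (x * x') = χ (v * r') := by
  rw [← mul_assoc, map_mul, mul_assoc (χ u), hx, ← map_mul, hore, map_mul, mul_assoc, hx',
    ← map_mul]

end FractionArithmetic

namespace IsLeftOreLocalization

variable {R A B C : Type*} [Ring R] [Ring A] [Ring B] [Ring C] {S : Set R}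
  {φ : R →+* A} {ψ : R →+* B}

theorem mono {S' : Set R} (hφ : IsLeftOreLocalization S φ) (hSS' : S ⊆ S')
    (hunit : ∀ s ∈ S', IsUnit (φ s)) : IsLeftOreLocalization S' φ where
  injective := hφ.injective
  isUnit := hunit
  surj x := by
    obtain ⟨s, hs, r, h⟩ := hφ.surj x
    exact ⟨s, hSS' hs, r, h⟩

theorem fraction_congr (hS : LeftOreCond S) (hφ : Function.Injective φ)
    (hψ : ∀ s ∈ S, IsUnit (ψ s)) {s r s₁ r₁ : R} {x : A} {y : B} (hs : s ∈ S)
    (hx : φ s * x = φ r) (hx₁ : φ s₁ * x = φ r₁) (hy : ψ s * y = ψ r) :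
    ψ s₁ * y = ψ r₁ := by
  obtain ⟨u, hu, v, huv⟩ := hS s hs s₁
  have hnum : u * r₁ = v * r := hφ <| by
    rw [map_mul, ← hx₁, ← mul_assoc, ← map_mul, huv, map_mul, mul_assoc, hx, map_mul]
  refine (hψ u hu).mul_left_cancel ?_
  rw [← mul_assoc, ← map_mul, huv, map_mul, mul_assoc, hy, ← map_mul, ← hnum, map_mul]

theorem exists_lift_value (hS : LeftOreCond S) (hφ : IsLeftOreLocalization S φ)
    (hψ : ∀ s ∈ S, IsUnit (ψ s)) (x : A) :
    ∃ y : B, ∀ s ∈ S, ∀ r : R, φ s * x = φ r → ψ s * y = ψ r := by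
  obtain ⟨s, hs, r, h⟩ := hφ.surj x
  refine ⟨↑(hψ s hs).unit⁻¹ * ψ r, fun s₁ _ r₁ h₁ =>
    fraction_congr hS hφ.injective hψ hs h h₁ ?_⟩
  rw [← mul_assoc, (hψ s hs).mul_val_inv, one_mul]

theorem lift_value_eq (hψ : ∀ s ∈ S, IsUnit (ψ s))
    {f : A → B} (hf : ∀ x, ∀ s ∈ S, ∀ r : R, φ s * x = φ r → ψ s * f x = ψ r)
    {x : A} {y : B} {s r : R} (hs : s ∈ S) (hx : φ s * x = φ r) (hy : ψ s * y = ψ r) :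
    f x = y :=
  (hψ s hs).mul_left_cancel ((hf x s hs r hx).trans hy.symm)

/-- The ring hom `φ(s)⁻¹φ(r) ↦ ψ(s)⁻¹ψ(r)`. -/
noncomputable def lift (hS : IsLeftOreSet S) (hφ : IsLeftOreLocalization S φ)
    (hψ : ∀ s ∈ S, IsUnit (ψ s)) : A →+* B :=
  have hf := fun x => (exists_lift_value hS.2 hφ hψ x).choose_spec
  have h1 : (1 : R) ∈ S := hS.1.1
  { toFun := fun x => (exists_lift_value hS.2 hφ hψ x).choose
    map_one' := lift_value_eq hψ hf h1 (by rw [mul_one]) (by rw [mul_one])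
    map_zero' := lift_value_eq hψ hf h1 (r := 0) (by simp) (by simp)
    map_add' := fun x x' => by
      obtain ⟨s, hs, r, hx⟩ := hφ.surj x
      obtain ⟨s', hs', r', hx'⟩ := hφ.surj x'
      obtain ⟨u, hu, v, hore⟩ := hS.2 s' hs' s
      exact lift_value_eq hψ hf (hS.1.2.2 u hu s hs) (φ.fraction_add hx hx' hore)
        (ψ.fraction_add (hf x s hs r hx) (hf x' s' hs' r' hx') hore)
    map_mul' := fun x x' => by
      obtain ⟨s, hs, r, hx⟩ := hφ.surj x
      obtain ⟨s', hs', r', hx'⟩ := hφ.surj x'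
      obtain ⟨u, hu, v, hore⟩ := hS.2 s' hs' r
      exact lift_value_eq hψ hf (hS.1.2.2 u hu s hs) (φ.fraction_mul hx hx' hore)
        (ψ.fraction_mul (hf x s hs r hx) (hf x' s' hs' r' hx') hore) }

theorem lift_comp (hS : IsLeftOreSet S) (hφ : IsLeftOreLocalization S φ)
    (hψ : ∀ s ∈ S, IsUnit (ψ s)) : (lift hS hφ hψ).comp φ = ψ := by
  ext r
  have h := (exists_lift_value hS.2 hφ hψ (φ r)).choose_spec 1 hS.1.1 r (by rw [map_one, one_mul])
  rwa [map_one, one_mul] at h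

theorem ringHom_ext (hφ : IsLeftOreLocalization S φ) {f f' : A →+* C}
    (h : f.comp φ = f'.comp φ) : f = f' := by
  ext x
  obtain ⟨s, hs, r, hx⟩ := hφ.surj x
  have hsr : ∀ χ : A →+* C, χ (φ s) * χ x = χ (φ r) := fun χ => by rw [← map_mul, hx]
  have hunit : IsUnit (f (φ s)) := (hφ.isUnit s hs).map f
  refine hunit.mul_left_cancel ((hsr f).trans ?_)
  rw [← RingHom.comp_apply, h, RingHom.comp_apply, ← hsr f', ← RingHom.comp_apply f, h,
    RingHom.comp_apply]

noncomputable def ringEquiv (hS : IsLeftOreSet S) (hφ : IsLeftOreLocalization S φ)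
    (hψ : IsLeftOreLocalization S ψ) : A ≃+* B :=
  RingEquiv.ofRingHom (lift hS hφ hψ.isUnit) (lift hS hψ hφ.isUnit)
    (hψ.ringHom_ext <| by
      rw [RingHom.comp_assoc, lift_comp, lift_comp, RingHom.id_comp])
    (hφ.ringHom_ext <| by
      rw [RingHom.comp_assoc, lift_comp, lift_comp, RingHom.id_comp])

end IsLeftOreLocalization

theorem stmt_14_general {R A B : Type*} [Ring R] [Ring A] [Ring B]
    {k : ℕ} (g : Fin k → R)
    (hcomm : ∀ i j, g i * g j = g j * g i)
    (hS : IsLeftOreSet ((Submonoid.closure (Set.range g) : Submonoid R) : Set R))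
    (φ : R →+* A)
    (hφ : IsLeftOreLocalization ((Submonoid.closure (Set.range g) : Submonoid R) : Set R) φ)
    (φ' : R →+* B)
    (hφ' : IsLeftOreLocalization
      ((Submonoid.closure {(List.ofFn g).prod} : Submonoid R) : Set R) φ') :
    Nonempty (A ≃+* B) := by
  have hprod_mem : (List.ofFn g).prod ∈ Submonoid.closure (Set.range g) :=
    Submonoid.list_prod_mem _ fun x hx => Submonoid.subset_closure (List.mem_ofFn.mp hx)
  have hTS : Submonoid.closure {(List.ofFn g).prod} ≤ Submonoid.closure (Set.range g) :=
    Submonoid.closure_le.mpr (Set.singleton_subset_iff.mpr hprod_mem)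
  have hunit : ∀ s ∈ Submonoid.closure (Set.range g), IsUnit (φ' s) :=
    fun s hs => isUnit_of_mem_closure_of_isUnit_prod g hcomm φ'.toMonoidHom
      (hφ'.isUnit _ (Submonoid.subset_closure rfl)) hs
  exact ⟨hφ.ringEquiv hS (hφ'.mono hTS hunit)⟩

/-- for pairwise commuting nonzero `g₁, …, g_k` in a domain `R`,
if `S = [g₁, …, g_k]` and `T = [g₁⋯g_k]` are left Ore sets, then
`S⁻¹R ≅ T⁻¹R` as rings. -/
theorem stmt_14 {R A B : Type*} [Ring R] [IsDomain R] [Ring A] [Ring B]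
    {k : ℕ} (g : Fin k → R) (hg : ∀ i, g i ≠ 0)
    (hcomm : ∀ i j, g i * g j = g j * g i)
    (hS : IsLeftOreSet ((Submonoid.closure (Set.range g) : Submonoid R) : Set R))
    (hT : IsLeftOreSet ((Submonoid.closure {(List.ofFn g).prod} : Submonoid R) : Set R))
    (φ : R →+* A)
    (hφ : IsLeftOreLocalization ((Submonoid.closure (Set.range g) : Submonoid R) : Set R) φ)
    (φ' : R →+* B)
    (hφ' : IsLeftOreLocalization
      ((Submonoid.closure {(List.ofFn g).prod} : Submonoid R) : Set R) φ') :
    Nonempty (A ≃+* B) :=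
  stmt_14_general g hcomm hS φ hφ φ' hφ'
end

section
/- Let K be a commutative ring, σ a finite index type, and W the K-subalgebra of K-linear endomorphisms of K[xᵢ : i ∈ σ] generated by the multiplication operators M_{x_i} (i ∈ σ) and the partial derivative operators P_i = ∂/∂x_i (i ∈ σ). Then for every r ∈ W and every polynomial f there exists d ∈ ℕ such that for every k ∈ ℕ there exist r̃, r̂ ∈ W with M_f^{d+k} ∘ r = r̃ ∘ M_f^k and r ∘ M_f^{d+k} = M_f^k ∘ r̂. -/
/-- Left multiplication by the polynomial `f` on `K[xᵢ : i ∈ σ]`. -/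
noncomputable def Mop (K : Type*) [CommRing K] (σ : Type*) (f : MvPolynomial σ K) :
    Module.End K (MvPolynomial σ K) :=
  LinearMap.mulLeft K f

/-- The partial derivative `∂/∂x_j` on `K[xᵢ : i ∈ σ]`. -/
noncomputable def Pop (K : Type*) [CommRing K] (σ : Type*) (j : σ) :
    Module.End K (MvPolynomial σ K) :=
  (MvPolynomial.pderiv j).toLinearMap

/-- The Weyl algebra realized as the subalgebra of `End_K(K[xᵢ : i ∈ σ])`
generated by the multiplication operators `M_{x_i}` and the partial
derivatives `P_i`. -/
noncomputable def WeylOps (K : Type*) [CommRing K] (σ : Type*) :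
    Subalgebra K (Module.End K (MvPolynomial σ K)) :=
  Algebra.adjoin K
    ((Set.range fun i : σ => Mop K σ (MvPolynomial.X i)) ∪
      (Set.range fun i : σ => Pop K σ i))

section Aux

variable {K : Type*} [CommRing K] {σ : Type*}

lemma Mop_mul (f g : MvPolynomial σ K) : Mop K σ (f * g) = Mop K σ f * Mop K σ g := by
  ext p; simp [Mop, Module.End.mul_apply, mul_assoc]

lemma Mop_add (f g : MvPolynomial σ K) : Mop K σ (f + g) = Mop K σ f + Mop K σ g := by
  ext p; simp [Mop, add_mul]

lemma Mop_comm (f g : MvPolynomial σ K) : Commute (Mop K σ f) (Mop K σ g) := by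
  ext p; simp [Mop, Module.End.mul_apply]; ring

lemma Mop_mem (f : MvPolynomial σ K) : Mop K σ f ∈ WeylOps K σ := by
  have h : f ∈ Algebra.adjoin K (Set.range (MvPolynomial.X : σ → MvPolynomial σ K)) := by
    rw [MvPolynomial.adjoin_range_X]; trivial
  induction h using Algebra.adjoin_induction with
  | mem x hx =>
    obtain ⟨i, rfl⟩ := hx
    exact Algebra.subset_adjoin (Or.inl ⟨i, rfl⟩)
  | algebraMap a =>
    have : Mop K σ (algebraMap K (MvPolynomial σ K) a)
        = algebraMap K (Module.End K (MvPolynomial σ K)) a := by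
      ext p
      simp [Mop, Module.algebraMap_end_apply, Algebra.smul_def]
    rw [this]; exact Subalgebra.algebraMap_mem _ a
  | add x y hx hy px py => rw [Mop_add]; exact add_mem px py
  | mul x y hx hy px py => rw [Mop_mul]; exact mul_mem px py

lemma Pop_Mop (f : MvPolynomial σ K) (j : σ) :
    Pop K σ j * Mop K σ f = Mop K σ f * Pop K σ j + Mop K σ (MvPolynomial.pderiv j f) := by
  ext p
  simp [Mop, Pop, Module.End.mul_apply]
  ring

lemma pow_Mop_Pop (f : MvPolynomial σ K) (j : σ) (k : ℕ) :
    (Mop K σ f) ^ (k + 1) * Pop K σ j =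
      (Mop K σ f * Pop K σ j - k • Mop K σ (MvPolynomial.pderiv j f)) * (Mop K σ f) ^ k := by
  induction k with
  | zero => simp
  | succ k ih =>
    set M := Mop K σ f
    set P := Pop K σ j
    set G := Mop K σ (MvPolynomial.pderiv j f)
    have hGM : G * M = M * G := (Mop_comm _ _).symm.eq
    have hPM : P * M = M * P + G := Pop_Mop f j
    have key : M * (M * P - k • G) = (M * P - (k + 1) • G) * M := by
      have e1 : M * (M * P - k • G) = M * (M * P) - k • (M * G) := by
        rw [mul_sub, mul_smul_comm]
      have e2 : (M * P - (k + 1) • G) * M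
          = M * (M * P) + M * G - (k • (M * G) + M * G) := by
        rw [sub_mul, smul_mul_assoc, hGM, mul_assoc, hPM, mul_add, add_smul, one_smul]
      rw [e1, e2]; abel
    calc M ^ (k + 2) * P = M * (M ^ (k + 1) * P) := by rw [← mul_assoc, ← pow_succ']
      _ = M * ((M * P - k • G) * M ^ k) := by rw [ih]
      _ = (M * (M * P - k • G)) * M ^ k := by rw [mul_assoc]
      _ = ((M * P - (k + 1) • G) * M) * M ^ k := by rw [key]
      _ = (M * P - (k + 1) • G) * M ^ (k + 1) := by rw [mul_assoc, ← pow_succ']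

lemma Pop_pow_Mop (f : MvPolynomial σ K) (j : σ) (k : ℕ) :
    Pop K σ j * (Mop K σ f) ^ (k + 1) =
      (Mop K σ f) ^ k * (Mop K σ f * Pop K σ j + (k + 1) • Mop K σ (MvPolynomial.pderiv j f)) := by
  induction k with
  | zero => simpa using Pop_Mop f j
  | succ k ih =>
    set M := Mop K σ f
    set P := Pop K σ j
    set G := Mop K σ (MvPolynomial.pderiv j f)
    have hGM : G * M = M * G := (Mop_comm _ _).symm.eq
    have hPM : P * M = M * P + G := Pop_Mop f j
    have key : (M * P + (k + 1) • G) * M = M * (M * P + (k + 2) • G) := by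
      have e1 : (M * P + (k + 1) • G) * M
          = M * (M * P) + M * G + (k • (M * G) + M * G) := by
        rw [add_mul, smul_mul_assoc, hGM, mul_assoc, hPM, mul_add, add_smul, one_smul]
      have e2 : M * (M * P + (k + 2) • G)
          = M * (M * P) + (k • (M * G) + (M * G + M * G)) := by
        rw [mul_add, mul_smul_comm, add_smul, two_smul]
      rw [e1, e2]; abel
    calc P * M ^ (k + 2) = (P * M ^ (k + 1)) * M := by rw [mul_assoc, ← pow_succ]
      _ = (M ^ k * (M * P + (k + 1) • G)) * M := by rw [ih]
      _ = M ^ k * ((M * P + (k + 1) • G) * M) := by rw [mul_assoc]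
      _ = M ^ k * (M * (M * P + (k + 2) • G)) := by rw [key]
      _ = M ^ (k + 1) * (M * P + (k + 2) • G) := by rw [← mul_assoc, ← pow_succ]

end Aux

/-- for every `r` in the Weyl algebra `W` and every polynomial `f`
there is `d ∈ ℕ` such that for all `k` there are `r̃, r̂ ∈ W` with
`M_f^{d+k} ∘ r = r̃ ∘ M_f^k` and `r ∘ M_f^{d+k} = M_f^k ∘ r̂`. -/
theorem stmt_17 {K : Type*} [CommRing K] {σ : Type*} [Fintype σ]
    (r : Module.End K (MvPolynomial σ K)) (hr : r ∈ WeylOps K σ)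
    (f : MvPolynomial σ K) :
    ∃ d : ℕ, ∀ k : ℕ, ∃ r₁ ∈ WeylOps K σ, ∃ r₂ ∈ WeylOps K σ,
      (Mop K σ f) ^ (d + k) * r = r₁ * (Mop K σ f) ^ k ∧
      r * (Mop K σ f) ^ (d + k) = (Mop K σ f) ^ k * r₂ := by
  induction hr using Algebra.adjoin_induction with
  | mem x hx =>
    rcases hx with ⟨i, rfl⟩ | ⟨j, rfl⟩
    · refine ⟨0, fun k => ⟨Mop K σ (MvPolynomial.X i), Algebra.subset_adjoin (Or.inl ⟨i, rfl⟩),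
        Mop K σ (MvPolynomial.X i), Algebra.subset_adjoin (Or.inl ⟨i, rfl⟩), ?_, ?_⟩⟩
      · simpa using ((Mop_comm (MvPolynomial.X i) f).pow_right k).symm.eq
      · simpa using ((Mop_comm (MvPolynomial.X i) f).pow_right k).eq
    · refine ⟨1, fun k => ?_⟩
      have hP : Pop K σ j ∈ WeylOps K σ := Algebra.subset_adjoin (Or.inr ⟨j, rfl⟩)
      have hG : Mop K σ (MvPolynomial.pderiv j f) ∈ WeylOps K σ := Mop_mem _
      refine ⟨Mop K σ f * Pop K σ j - k • Mop K σ (MvPolynomial.pderiv j f),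
        sub_mem (mul_mem (Mop_mem f) hP) (nsmul_mem hG k),
        Mop K σ f * Pop K σ j + (k + 1) • Mop K σ (MvPolynomial.pderiv j f),
        add_mem (mul_mem (Mop_mem f) hP) (nsmul_mem hG (k + 1)), ?_, ?_⟩
      · rw [add_comm 1 k]; exact pow_Mop_Pop f j k
      · rw [add_comm 1 k]; exact Pop_pow_Mop f j k
  | algebraMap a =>
    refine ⟨0, fun k => ⟨algebraMap K _ a, Subalgebra.algebraMap_mem _ a,
      algebraMap K _ a, Subalgebra.algebraMap_mem _ a, ?_, ?_⟩⟩
    · simpa using (Algebra.commutes a ((Mop K σ f) ^ k)).symm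
    · simpa using Algebra.commutes a ((Mop K σ f) ^ k)
  | add x y hx hy px py =>
    obtain ⟨da, ha⟩ := px
    obtain ⟨db, hb⟩ := py
    refine ⟨da + db, fun k => ?_⟩
    obtain ⟨a₁, ha₁, a₂, ha₂, ea1, ea2⟩ := ha (db + k)
    obtain ⟨b₁, hb₁, b₂, hb₂, eb1, eb2⟩ := hb (da + k)
    have e1 : da + db + k = da + (db + k) := by ring
    have e2 : da + db + k = db + (da + k) := by ring
    have hMW : ∀ n : ℕ, (Mop K σ f) ^ n ∈ WeylOps K σ := fun n => pow_mem (Mop_mem f) n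
    refine ⟨a₁ * (Mop K σ f) ^ db + b₁ * (Mop K σ f) ^ da,
      add_mem (mul_mem ha₁ (hMW db)) (mul_mem hb₁ (hMW da)),
      (Mop K σ f) ^ db * a₂ + (Mop K σ f) ^ da * b₂,
      add_mem (mul_mem (hMW db) ha₂) (mul_mem (hMW da) hb₂), ?_, ?_⟩
    · rw [mul_add, add_mul]
      congr 1
      · rw [e1, ea1, pow_add, mul_assoc]
      · rw [e2, eb1, pow_add, mul_assoc]
    · rw [add_mul, mul_add]
      congr 1
      · rw [e1, ea2, add_comm db k, pow_add, mul_assoc]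
      · rw [e2, eb2, add_comm da k, pow_add, mul_assoc]
  | mul x y hx hy px py =>
    obtain ⟨da, ha⟩ := px
    obtain ⟨db, hb⟩ := py
    refine ⟨da + db, fun k => ?_⟩
    obtain ⟨aL, haL, _, _, eaL, _⟩ := ha (db + k)
    obtain ⟨bL, hbL, _, _, ebL, _⟩ := hb k
    obtain ⟨_, _, aR, haR, _, eaR⟩ := ha k
    obtain ⟨_, _, bR, hbR, _, ebR⟩ := hb (da + k)
    have e1 : da + db + k = da + (db + k) := by ring
    have e2 : da + db + k = db + (da + k) := by ring
    refine ⟨aL * bL, mul_mem haL hbL, aR * bR, mul_mem haR hbR, ?_, ?_⟩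
    · rw [e1, ← mul_assoc, eaL, mul_assoc, ebL, ← mul_assoc]
    · rw [e2, mul_assoc, ebR, ← mul_assoc, eaR, mul_assoc]
end

section
/- Let S be a left Ore set in a domain R. Let s ∈ S and r ∈ R, and let a, b ∈ R with (a, b) ≠ (0, 0) be a right syzygy of (s, r), i.e. s·a + r·b = 0. If q ∈ S and p ∈ R satisfy q·a + p·b = 0, then the left fractions q⁻¹p and s⁻¹r are equal in the Ore localization S⁻¹R. -/
/-- if `(a, b) ≠ (0, 0)` is a right syzygy of `(s, r)`, i.e.
`s * a + r * b = 0`, and `q ∈ S`, `p ∈ R` satisfy `q * a + p * b = 0`, then the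
left fractions `q⁻¹p` and `s⁻¹r` are equal in `S⁻¹R`, i.e. there are `s' ∈ S`
and `r' ∈ R` with `s' * s = r' * q` and `s' * r = r' * p`. -/
theorem stmt_19 {R : Type*} [Ring R] [IsDomain R] (S : Set R)
    (hS : IsLeftOreSet S) (s : R) (hs : s ∈ S) (r : R)
    (a b : R) (hab : (a, b) ≠ (0, 0)) (hsyz : s * a + r * b = 0)
    (q : R) (hq : q ∈ S) (p : R) (hqp : q * a + p * b = 0) :
    ∃ s' ∈ S, ∃ r' : R, s' * s = r' * q ∧ s' * r = r' * p := by
  obtain ⟨⟨-, h0, -⟩, hOre⟩ := hS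
  have hsne : s ≠ 0 := fun h => h0 (h ▸ hs)
  have hb : b ≠ 0 := by
    intro h
    subst h
    simp only [mul_zero, add_zero] at hsyz
    rcases mul_eq_zero.mp hsyz with h | h
    · exact hsne h
    · exact hab (by simp [h])
  obtain ⟨u, hu, v, huv⟩ := hOre q hq s
  refine ⟨u, hu, v, huv, ?_⟩
  have h1 : u * s * a + u * r * b = 0 := by
    rw [mul_assoc, mul_assoc, ← mul_add, hsyz, mul_zero]
  have h2 : v * q * a + v * p * b = 0 := by
    rw [mul_assoc, mul_assoc, ← mul_add, hqp, mul_zero]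
  rw [huv] at h1
  have : u * r * b = v * p * b := add_left_cancel (h1.trans h2.symm)
  exact mul_right_cancel₀ hb this
end
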